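/- Let κ be an infinite cardinal and G = S_X^{<κ}. Then every permutation h of X is an asymorphism of the coarse space X_G, i.e., both h and h⁻¹ are macro-uniform. -/

import Mathlib

open Set

/-- Composition of two relations (as subsets of `X × X`). -/
def relComp {X : Type*} (s t : Set (X × X)) : Set (X × X) :=
  {p | ∃ z, (p.1, z) ∈ s ∧ (z, p.2) ∈ t}

/-- Inverse of a relation. -/
def relInv {X : Type*} (s : Set (X × X)) : Set (X × X) := {p | (p.2, p.1) ∈ s}

/-- A coarse structure on `X`: a family of reflexive relations closed under
composition, inversion and reflexive subrelations, whose union is `X × X`. -/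
structure IsCoarse {X : Type*} (𝓔 : Set (Set (X × X))) : Prop where
  refl : ∀ s ∈ 𝓔, ∀ x : X, (x, x) ∈ s
  comp : ∀ s ∈ 𝓔, ∀ t ∈ 𝓔, relComp s t ∈ 𝓔
  inv : ∀ s ∈ 𝓔, relInv s ∈ 𝓔
  subrel : ∀ s ∈ 𝓔, ∀ t, (∀ x : X, (x, x) ∈ t) → t ⊆ s → t ∈ 𝓔
  cover : ∀ p : X × X, ∃ s ∈ 𝓔, p ∈ s

/-- The ball of radius `s` around `x`. -/
def ball {X : Type*} (s : Set (X × X)) (x : X) : Set X := {y | (x, y) ∈ s}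

/-- A set is bounded if it is contained in some ball. -/
def IsBoundedIn {X : Type*} (𝓔 : Set (Set (X × X))) (B : Set X) : Prop :=
  ∃ s ∈ 𝓔, ∃ x : X, B ⊆ ball s x

/-- A bornology: closed under subsets and finite unions, contains all finite sets. -/
def IsBornology {X : Type*} (𝓑 : Set (Set X)) : Prop :=
  (∀ A ∈ 𝓑, ∀ B ⊆ A, B ∈ 𝓑) ∧ (∀ A ∈ 𝓑, ∀ B ∈ 𝓑, A ∪ B ∈ 𝓑) ∧
    (∀ A : Set X, A.Finite → A ∈ 𝓑)

/-- The entourage `E_B = Δ_X ∪ (B × B)` of the discrete coarse space. -/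
def EB {X : Type*} (B : Set X) : Set (X × X) :=
  {p | p.1 = p.2 ∨ (p.1 ∈ B ∧ p.2 ∈ B)}

/-- The discrete coarse structure defined by a bornology `𝓑`. -/
def discreteCoarse {X : Type*} (𝓑 : Set (Set X)) : Set (Set (X × X)) :=
  {s | (∀ x : X, (x, x) ∈ s) ∧ ∃ B ∈ 𝓑, s ⊆ EB B}

/-- `𝓔'` is a base for `𝓔`. -/
def IsBase {X : Type*} (𝓔' 𝓔 : Set (Set (X × X))) : Prop :=
  𝓔' ⊆ 𝓔 ∧ ∀ s ∈ 𝓔, ∃ t ∈ 𝓔', s ⊆ t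

/-- Discrete coarse space: outside some bounded set all balls are singletons. -/
def IsDiscrete' {X : Type*} (𝓔 : Set (Set (X × X))) : Prop :=
  ∀ s ∈ 𝓔, ∃ B : Set X, IsBoundedIn 𝓔 B ∧ ∀ x ∉ B, ball s x = {x}

/-- A self-map is bornologous if it sends bounded sets to bounded sets. -/
def Bornologous {X : Type*} (𝓔 : Set (Set (X × X))) (f : X → X) : Prop :=
  ∀ B : Set X, IsBoundedIn 𝓔 B → IsBoundedIn 𝓔 (f '' B)

/-- A self-map is macro-uniform. -/
def MacroUniform {X : Type*} (𝓔 : Set (Set (X × X))) (f : X → X) : Prop :=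
  ∀ s ∈ 𝓔, ∃ t ∈ 𝓔, ∀ x y : X, (x, y) ∈ s → (f x, f y) ∈ t

/-- The entourage determined by a finite set `F` of permutations. -/
def EF {X : Type*} (F : Finset (Equiv.Perm X)) : Set (X × X) :=
  {p | ∃ g ∈ F, p.2 = g p.1}

/-- The coarse structure on `X` generated by a set `G` of permutations of `X`
(with base the entourages `EF F`, `F ⊆ G` finite containing the identity). -/
def permCoarse {X : Type*} (G : Set (Equiv.Perm X)) : Set (Set (X × X)) :=
  {s | (∀ x : X, (x, x) ∈ s) ∧
    ∃ F : Finset (Equiv.Perm X), ↑F ⊆ G ∧ (1 : Equiv.Perm X) ∈ F ∧ s ⊆ EF F}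

/-- The support of a permutation. -/
def psupp {X : Type*} (g : Equiv.Perm X) : Set X := {x | g x ≠ x}

/-- Permutations of support of cardinality less than `κ`. -/
def SuppLT (X : Type*) (κ : Cardinal) : Set (Equiv.Perm X) :=
  {g | Cardinal.mk (psupp g) < κ}

/-- A permutation compatible with the coarse structure `𝓔`. -/
def Compatible {X : Type*} (𝓔 : Set (Set (X × X))) (g : Equiv.Perm X) : Prop :=
  ∃ s ∈ 𝓔, ∀ x : X, (x, g x) ∈ s

/-- A finitary coarse space: uniformly bounded finite balls. -/
def Finitary {X : Type*} (𝓔 : Set (Set (X × X))) : Prop :=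
  ∀ s ∈ 𝓔, ∃ n : ℕ, ∀ x : X, (ball s x).Finite ∧ (ball s x).ncard < n

/-- A locally finite coarse space: all balls finite. -/
def LocallyFinite' {X : Type*} (𝓔 : Set (Set (X × X))) : Prop :=
  ∀ s ∈ 𝓔, ∀ x : X, (ball s x).Finite

/-- A crowded subset: some entourage has nontrivial balls at all its points. -/
def Crowded {X : Type*} (𝓔 : Set (Set (X × X))) (Y : Set X) : Prop :=
  ∃ s ∈ 𝓔, ∀ y ∈ Y, 1 < (ball s y).ncard

/-- An asymorphism: a permutation which is macro-uniform in both directions. -/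
def IsAsymorphism {X : Type*} (𝓔 : Set (Set (X × X))) (h : Equiv.Perm X) : Prop :=
  MacroUniform 𝓔 h ∧ MacroUniform 𝓔 h.symm

/-! A permutation `h` carries the generating entourage `E_F` onto `E_{hFh⁻¹}`, so `h` is
macro-uniform for `X_G` as soon as `G` is closed under conjugation by `h`. The group
`S_X^{<κ}` is normal in `S_X`, since conjugation by `h` moves supports by the bijection `h`. -/

lemma psupp_conj {X : Type*} (h g : Equiv.Perm X) :
    psupp (h * g * h⁻¹) = h '' psupp g := by
  ext x
  rw [← h.apply_symm_apply x, h.injective.mem_set_image]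
  simp [psupp, Equiv.Perm.inv_def, ← h.eq_symm_apply]

lemma conj_mem_suppLT {X : Type*} {κ : Cardinal} {g : Equiv.Perm X} (h : Equiv.Perm X)
    (hg : g ∈ SuppLT X κ) : h * g * h⁻¹ ∈ SuppLT X κ := by
  rwa [SuppLT, mem_ofPred_eq, psupp_conj, Cardinal.mk_image_eq h.injective]

lemma map_mem_EF_image_conj {X : Type*} [DecidableEq (Equiv.Perm X)]
    (h : Equiv.Perm X) {F : Finset (Equiv.Perm X)} {x y : X} (hxy : (x, y) ∈ EF F) :
    (h x, h y) ∈ EF (F.image (MulAut.conj h)) := by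
  obtain ⟨g, hg, hy⟩ := hxy
  exact ⟨MulAut.conj h g, Finset.mem_image_of_mem _ hg, by simpa using hy⟩

lemma macroUniform_permCoarse_of_conj_mem {X : Type*} {G : Set (Equiv.Perm X)}
    (h : Equiv.Perm X) (hG : ∀ g ∈ G, h * g * h⁻¹ ∈ G) :
    MacroUniform (permCoarse G) h := by
  classical
  rintro s ⟨-, F, hFG, h1F, hsF⟩
  have h1 : (1 : Equiv.Perm X) ∈ F.image (MulAut.conj h) := by
    simpa using Finset.mem_image_of_mem (MulAut.conj h) h1F
  refine ⟨EF (F.image (MulAut.conj h)), ⟨fun x => ⟨1, h1, rfl⟩, _, ?_, h1, subset_rfl⟩,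
    fun x y hxy => map_mem_EF_image_conj h (hsF hxy)⟩
  simp only [Finset.coe_image, image_subset_iff]
  exact fun g hg => hG g (hFG hg)

theorem perm_asymorphism_suppLT_general {X : Type*} (κ : Cardinal)
    (h : Equiv.Perm X) :
    IsAsymorphism (permCoarse (SuppLT X κ)) h :=
  ⟨macroUniform_permCoarse_of_conj_mem h fun _ => conj_mem_suppLT h,
    macroUniform_permCoarse_of_conj_mem h.symm fun _ => conj_mem_suppLT h.symm⟩

theorem perm_asymorphism_suppLT {X : Type*} [Infinite X] (κ : Cardinal)
    (hκ : Cardinal.aleph0 ≤ κ) (h : Equiv.Perm X) :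
    IsAsymorphism (permCoarse (SuppLT X κ)) h :=
  perm_asymorphism_suppLT_general κ h
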